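/- Let ν ∈ ℝ⁴ be a unit vector. Then for all V, W ∈ ℝ⁴ orthogonal to ν, ω₀(V, W) = ⟪V, j·ν⟫·⟪W, k·ν⟫ − ⟪V, k·ν⟫·⟪W, j·ν⟫. In particular, for any 2-dimensional subspace F contained in ν^⊥ on which ω₀ is nondegenerate, the quaternionic trivialization τ_F(V) = (⟪V, j·ν⟫, ⟪V, k·ν⟫) is an isomorphism of symplectic vector spaces from (F, ω₀|_F) to ℝ² with its standard area form. (Lemma 2.16 of the paper.) -/

import Mathlib

open RealInnerProductSpace

/-- The standard complex structure on ℝ⁴: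
`i(x₁,x₂,y₁,y₂) = (−y₁,−y₂,x₁,x₂)`. -/
def Imap (v : EuclideanSpace ℝ (Fin 4)) : EuclideanSpace ℝ (Fin 4) :=
  WithLp.toLp 2 ![-(v 2), -(v 3), v 0, v 1]

/-- The quaternion `j` acting on ℝ⁴: `j(x₁,x₂,y₁,y₂) = (−x₂,x₁,y₂,−y₁)`. -/
def Jmap (v : EuclideanSpace ℝ (Fin 4)) : EuclideanSpace ℝ (Fin 4) :=
  WithLp.toLp 2 ![-(v 1), v 0, v 3, -(v 2)]

/-- The quaternion `k` acting on ℝ⁴: `k(x₁,x₂,y₁,y₂) = (−y₂,y₁,−x₂,x₁)`. -/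
def Kmap (v : EuclideanSpace ℝ (Fin 4)) : EuclideanSpace ℝ (Fin 4) :=
  WithLp.toLp 2 ![-(v 3), v 2, -(v 1), v 0]

/-- The standard symplectic form on ℝ⁴: `ω₀(u,v) = ⟪i·u, v⟫`. -/
noncomputable def omega0 (u v : EuclideanSpace ℝ (Fin 4)) : ℝ := ⟪Imap u, v⟫

/-!
For a unit vector `ν`, `(ν, iν, jν, kν)` is an orthonormal basis of ℝ⁴ in which `ω₀` pairs `ν`
with `iν` and `jν` with `kν`. Expanding `V` and `W` in this basis gives the formula for `ω₀`, and
for `V, W ⊥ ν` only the `jν, kν` terms survive. Hence `ω₀(u, v)` is the determinant of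
`τ(u), τ(v)`; if it is nonzero, Cramer's rule makes `τ` surjective, and since `dim F = 2` it is
also injective.
-/

local notation "ℝ⁴" => EuclideanSpace ℝ (Fin 4)

theorem norm_sq_mul_omega0 (ν V W : ℝ⁴) :
    ‖ν‖ ^ 2 * omega0 V W = ⟪V, ν⟫ * ⟪W, Imap ν⟫ - ⟪V, Imap ν⟫ * ⟪W, ν⟫
      + ⟪V, Jmap ν⟫ * ⟪W, Kmap ν⟫ - ⟪V, Kmap ν⟫ * ⟪W, Jmap ν⟫ := by
  rw [← real_inner_self_eq_norm_sq]
  simp only [omega0, Imap, Jmap, Kmap, PiLp.inner_apply, RCLike.inner_apply,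
    conj_trivial, Fin.sum_univ_four, Matrix.cons_val]
  ring

theorem omega0_eq_of_inner_eq_zero {ν : ℝ⁴} (hν : ‖ν‖ = 1) {V W : ℝ⁴} (hV : ⟪V, ν⟫ = 0)
    (hW : ⟪W, ν⟫ = 0) :
    omega0 V W = ⟪V, Jmap ν⟫ * ⟪W, Kmap ν⟫ - ⟪V, Kmap ν⟫ * ⟪W, Jmap ν⟫ := by
  simpa [hν, hV, hW] using norm_sq_mul_omega0 ν V W

/-- The paper's `τ_F` is the restriction of this map to `F`. -/
noncomputable def quaternionicTrivialization (ν : ℝ⁴) : ℝ⁴ →ₗ[ℝ] ℝ × ℝ :=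
  ((innerₗ ℝ⁴).flip (Jmap ν)).prod ((innerₗ ℝ⁴).flip (Kmap ν))

theorem LinearMap.surjective_of_det_ne_zero {K M : Type*} [Field K] [AddCommGroup M] [Module K M]
    (f : M →ₗ[K] K × K) {u v : M} (h : (f u).1 * (f v).2 - (f u).2 * (f v).1 ≠ 0) :
    Function.Surjective f := by
  intro p
  set d := (f u).1 * (f v).2 - (f u).2 * (f v).1
  refine ⟨((p.1 * (f v).2 - p.2 * (f v).1) / d) • u + (((f u).1 * p.2 - (f u).2 * p.1) / d) • v, ?_⟩
  ext <;> simp only [map_add, map_smul, Prod.fst_add, Prod.snd_add, Prod.smul_fst, Prod.smul_snd,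
    smul_eq_mul] <;> field_simp <;> ring

theorem LinearMap.bijective_of_det_ne_zero {K M : Type*} [Field K] [AddCommGroup M] [Module K M]
    [FiniteDimensional K M] (hM : Module.finrank K M = 2) (f : M →ₗ[K] K × K) {u v : M}
    (h : (f u).1 * (f v).2 - (f u).2 * (f v).1 ≠ 0) : Function.Bijective f :=
  have hsurj := f.surjective_of_det_ne_zero h
  ⟨(f.injective_iff_surjective_of_finrank_eq_finrank (by simp [hM])).mpr hsurj, hsurj⟩

/-- Lemma 2.16: for a unit vector `ν ∈ ℝ⁴` and `V, W ⊥ ν`, one has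
`ω₀(V, W) = ⟪V, jν⟫⟪W, kν⟫ − ⟪V, kν⟫⟪W, jν⟫`.  In particular, on any
2-dimensional subspace `F ⊆ ν^⊥` on which `ω₀` is nondegenerate, the quaternionic
trivialization `τ_F(V) = (⟪V, jν⟫, ⟪V, kν⟫)` is an isomorphism of symplectic
vector spaces onto `ℝ²` with its standard area form. -/
theorem quaternionic_trivialization_symplectic
    (ν : EuclideanSpace ℝ (Fin 4)) (hν : ‖ν‖ = 1) :
    (∀ V W : EuclideanSpace ℝ (Fin 4), ⟪V, ν⟫ = 0 → ⟪W, ν⟫ = 0 →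
      omega0 V W = ⟪V, Jmap ν⟫ * ⟪W, Kmap ν⟫ - ⟪V, Kmap ν⟫ * ⟪W, Jmap ν⟫) ∧
    (∀ F : Submodule ℝ (EuclideanSpace ℝ (Fin 4)),
      (∀ V ∈ F, ⟪V, ν⟫ = 0) → Module.finrank ℝ F = 2 →
      (∃ u ∈ F, ∃ v ∈ F, omega0 u v ≠ 0) →
      Function.Bijective (fun V : F =>
        ((⟪(V : EuclideanSpace ℝ (Fin 4)), Jmap ν⟫,
          ⟪(V : EuclideanSpace ℝ (Fin 4)), Kmap ν⟫) : ℝ × ℝ))) := by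
  refine ⟨fun V W hV hW => omega0_eq_of_inner_eq_zero hν hV hW, ?_⟩
  rintro F hF hrank ⟨u, hu, v, hv, hω⟩
  rw [omega0_eq_of_inner_eq_zero hν (hF u hu) (hF v hv)] at hω
  exact ((quaternionicTrivialization ν).domRestrict F).bijective_of_det_ne_zero hrank
    (u := ⟨u, hu⟩) (v := ⟨v, hv⟩) hω
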